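/- arXiv:2111.11116 — 3 statements merged into one kernel-verified Lean document; each statement's English description precedes it below -/
import Mathlib

section
/- Let a ∈ c₀(ℤ, K) and let ϖ ∈ K with 0 < ‖ϖ‖ < 1 be such that ‖a_i‖ ≤ ‖ϖ‖ for all i ∈ ℤ. Then for every i ∈ ℤ the series b_i := − Σ_{k≥0} (a_{i−k})^{q^k} converges in K, the resulting sequence b = (b_i)_{i∈ℤ} lies in c₀(ℤ, K) (i.e. b_i → 0 as i → ±∞), and (b_{i−1})^q − b_i = a_i for all i ∈ ℤ. In particular, every element of c₀(ℤ, K) all of whose coefficients have norm at most ‖ϖ‖ lies in the image of F − 1. -/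
/-!
Formally `b = -(1 + F + F² + ⋯) a` inverts `F - 1`. Since `‖a i‖ ≤ ‖ϖ‖ < 1`, the `k`-th term has
norm at most `‖ϖ‖ ^ q ^ k ≤ ‖ϖ‖ ^ k`, so every series converges in the complete ultrametric
field `K`, and the uniform geometric bound lets the termwise decay of `a` pass to `b`. In
characteristic `p` the map `x ↦ x ^ q` is a continuous ring endomorphism, so it can be applied
termwise to the series for `b (i - 1)`; this yields the series for `b i` without its `k = 0` term
`-a i`, i.e. `b (i - 1) ^ q = b i + a i`.
-/

open Filter

/-- A two-sided sequence `b : ℤ → K` tends to `0` as `|i| → ∞`,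
i.e. it lies in `c₀(ℤ, K)`. -/
def IsC0 {K : Type*} [NormedField K] (b : ℤ → K) : Prop :=
  Tendsto b cofinite (nhds 0)

open Topology

theorem IsUltrametricDist.tendsto_tsum_zero_of_dominated {ι E : Type*}
    [SeminormedAddCommGroup E] [IsUltrametricDist E] {l : Filter ι} {t : ι → ℕ → E}
    {g : ℕ → ℝ} (hg : Tendsto g atTop (𝓝 0)) (hdom : ∀ i k, ‖t i k‖ ≤ g k)
    (ht : ∀ k, Tendsto (fun i => t i k) l (𝓝 0)) :
    Tendsto (fun i => ∑' k, t i k) l (𝓝 0) := by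
  rw [NormedAddGroup.tendsto_nhds_zero]
  intro ε hε
  obtain ⟨N, htail⟩ := eventually_atTop.1 (hg.eventually (ge_mem_nhds (half_pos hε)))
  have hhead : ∀ᶠ i in l, ∀ k ∈ Finset.range N, ‖t i k‖ < ε / 2 :=
    (eventually_all_finset _).2 fun k _ =>
      NormedAddGroup.tendsto_nhds_zero.1 (ht k) _ (half_pos hε)
  filter_upwards [hhead] with i hi
  refine (norm_tsum_le_of_forall_le_of_nonneg (half_pos hε).le fun k => ?_).trans_lt
    (half_lt_self hε)
  rcases lt_or_ge k N with hk | hk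
  · exact (hi k (Finset.mem_range.2 hk)).le
  · exact (hdom i k).trans (htail k hk)

theorem norm_pow_pow_le_pow {R : Type*} [SeminormedRing R] {x : R} {r : ℝ} {q : ℕ}
    (hx : ‖x‖ ≤ r) (hr : r ≤ 1) (hq : 1 < q) (k : ℕ) : ‖x ^ q ^ k‖ ≤ r ^ k :=
  calc ‖x ^ q ^ k‖ ≤ ‖x‖ ^ q ^ k := norm_pow_le' x (by positivity)
    _ ≤ r ^ q ^ k := pow_le_pow_left₀ (norm_nonneg x) hx _
    _ ≤ r ^ k := pow_le_pow_of_le_one ((norm_nonneg x).trans hx) hr (Nat.lt_pow_self hq).le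

theorem HasSum.pow_expChar_pow {ι R : Type*} [CommRing R] [TopologicalSpace R]
    [IsTopologicalSemiring R] {p : ℕ} [ExpChar R p] {u : ι → R} {s : R} (hu : HasSum u s)
    (n : ℕ) : HasSum (fun k => u k ^ p ^ n) (s ^ p ^ n) :=
  hu.map (iterateFrobenius R p n) (continuous_pow _)

theorem pow_expChar_pow_sub_eq_of_hasSum {R : Type*} [CommRing R] [TopologicalSpace R]
    [IsTopologicalRing R] [T2Space R] {p : ℕ} [ExpChar R p] (n : ℕ) {a b : ℤ → R}
    (hb : ∀ i : ℤ, HasSum (fun k : ℕ => -(a (i - k) ^ (p ^ n) ^ k)) (b i)) (i : ℤ) :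
    b (i - 1) ^ p ^ n - b i = a i := by
  have hfrob := (hb (i - 1)).pow_expChar_pow (p := p) n
  have hterms : (fun k : ℕ => (-(a (i - 1 - k) ^ (p ^ n) ^ k)) ^ p ^ n) =
      fun k : ℕ => -(a (i - ((k + 1 : ℕ) : ℤ)) ^ (p ^ n) ^ (k + 1)) := by
    funext k
    rw [neg_pow, neg_one_pow_expChar_pow, ← pow_mul, ← pow_succ]
    push_cast
    ring_nf
  rw [hterms] at hfrob
  have hshift := (hasSum_nat_add_iff' 1).2 (hb i)
  simp only [Finset.range_one, Finset.sum_singleton, Nat.cast_zero, sub_zero, pow_zero,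
    pow_one, sub_neg_eq_add] at hshift
  rw [hfrob.unique hshift]
  ring

theorem exists_preimage_of_FSubOne_of_norm_le_general
    (p f q : ℕ) (hp : p.Prime) (hf : 1 ≤ f) (hq : q = p ^ f)
    (K : Type*) [NontriviallyNormedField K] [IsUltrametricDist K]
    [CompleteSpace K] [CharP K p]
    (a : ℤ → K) (ha : IsC0 a)
    (ϖ : K) (hϖ1 : ‖ϖ‖ < 1)
    (hbound : ∀ i : ℤ, ‖a i‖ ≤ ‖ϖ‖) :
    ∃ b : ℤ → K,
      (∀ i : ℤ, HasSum (fun k : ℕ => -((a (i - (k : ℤ))) ^ q ^ k)) (b i)) ∧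
      IsC0 b ∧
      (∀ i : ℤ, (b (i - 1)) ^ q - b i = a i) := by
  subst hq
  have := ExpChar.prime (R := K) hp
  have hgeom := tendsto_pow_atTop_nhds_zero_of_lt_one (norm_nonneg ϖ) hϖ1
  have hdom (i : ℤ) (k : ℕ) : ‖-((a (i - (k : ℤ))) ^ (p ^ f) ^ k)‖ ≤ ‖ϖ‖ ^ k :=
    (norm_neg _).trans_le <|
      norm_pow_pow_le_pow (hbound _) hϖ1.le (Nat.one_lt_pow (by omega) hp.one_lt) k
  have hsum (i : ℤ) : Summable fun k : ℕ => -((a (i - (k : ℤ))) ^ (p ^ f) ^ k) :=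
    NonarchimedeanAddGroup.summable_of_tendsto_cofinite_zero <| by
      rw [Nat.cofinite_eq_atTop]; exact squeeze_zero_norm (hdom i) hgeom
  refine ⟨_, fun i => (hsum i).hasSum, ?_,
    pow_expChar_pow_sub_eq_of_hasSum f fun i => (hsum i).hasSum⟩
  refine IsUltrametricDist.tendsto_tsum_zero_of_dominated hgeom hdom fun k => ?_
  have hshift : Tendsto (fun i : ℤ => a (i - k)) cofinite (𝓝 0) :=
    ha.comp sub_left_injective.tendsto_cofinite
  have hterm := (hshift.pow ((p ^ f) ^ k)).neg
  rwa [zero_pow (pow_ne_zero _ (pow_ne_zero _ hp.ne_zero)), neg_zero] at hterm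

/-- Let `K` be a complete nonarchimedean field of characteristic `p`, `q = p ^ f`.
If `a ∈ c₀(ℤ, K)` and `ϖ ∈ K` with `0 < ‖ϖ‖ < 1` satisfies `‖a i‖ ≤ ‖ϖ‖` for all `i`,
then the series `b i = -∑_{k ≥ 0} (a (i - k)) ^ (q ^ k)` converge, the resulting
sequence `b` lies in `c₀(ℤ, K)`, and `(b (i - 1)) ^ q - b i = a i` for all `i`;
in particular `a` lies in the image of `F - 1`. -/
theorem exists_preimage_of_FSubOne_of_norm_le
    (p f q : ℕ) (hp : p.Prime) (hf : 1 ≤ f) (hq : q = p ^ f)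
    (K : Type*) [NontriviallyNormedField K] [IsUltrametricDist K]
    [CompleteSpace K] [CharP K p]
    (a : ℤ → K) (ha : IsC0 a)
    (ϖ : K) (hϖ0 : 0 < ‖ϖ‖) (hϖ1 : ‖ϖ‖ < 1)
    (hbound : ∀ i : ℤ, ‖a i‖ ≤ ‖ϖ‖) :
    ∃ b : ℤ → K,
      (∀ i : ℤ, HasSum (fun k : ℕ => -((a (i - (k : ℤ))) ^ q ^ k)) (b i)) ∧
      IsC0 b ∧
      (∀ i : ℤ, (b (i - 1)) ^ q - b i = a i) :=
  exists_preimage_of_FSubOne_of_norm_le_general p f q hp hf hq K a ha ϖ hϖ1 hbound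
end

section
/- Let a ∈ c₀(ℤ, K) and ϖ ∈ K with 0 < ‖ϖ‖ < 1 be such that ‖a_i‖ ≤ ‖ϖ‖ for all i ∈ ℤ, and set b_i := − Σ_{k≥0} (a_{i−k})^{q^k}. Fix an integer N > 0 and let M > 0 be such that ‖a_j‖ ≤ ‖ϖ‖^{q^N} for all j > M. Then ‖b_i‖ ≤ ‖ϖ‖^{q^N} for all i > N + M. (This is the tail estimate proving that b_i → 0 as i → +∞.) -/
open Filter

/-- Tail estimate: with `b i = -∑_{k ≥ 0} (a (i - k)) ^ (q ^ k)`, if `N > 0` and `M > 0`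
are such that `‖a j‖ ≤ ‖ϖ‖ ^ (q ^ N)` for all `j > M`, then `‖b i‖ ≤ ‖ϖ‖ ^ (q ^ N)`
for all `i > N + M`. -/
theorem norm_b_le_of_tail_bound
    (p f q : ℕ) (hp : p.Prime) (hf : 1 ≤ f) (hq : q = p ^ f)
    (K : Type*) [NontriviallyNormedField K] [IsUltrametricDist K]
    [CompleteSpace K] [CharP K p]
    (a : ℤ → K) (ha : IsC0 a)
    (ϖ : K) (hϖ0 : 0 < ‖ϖ‖) (hϖ1 : ‖ϖ‖ < 1)
    (hbound : ∀ i : ℤ, ‖a i‖ ≤ ‖ϖ‖)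
    (b : ℤ → K) (hb : ∀ i : ℤ, b i = -∑' k : ℕ, (a (i - (k : ℤ))) ^ q ^ k)
    (N : ℕ) (hN : 0 < N)
    (M : ℤ) (hM : 0 < M)
    (hMbound : ∀ j : ℤ, M < j → ‖a j‖ ≤ ‖ϖ‖ ^ q ^ N) :
    ∀ i : ℤ, (N : ℤ) + M < i → ‖b i‖ ≤ ‖ϖ‖ ^ q ^ N := by
  have hq1 : 1 ≤ q := by
    rw [hq]
    exact Nat.one_le_pow _ _ hp.pos
  intro i hi
  rw [hb, norm_neg]
  apply IsUltrametricDist.norm_tsum_le_of_forall_le_of_nonneg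
    (by positivity)
  intro k
  rw [norm_pow]
  by_cases hk : k ≤ N
  · have h1 : M < i - (k : ℤ) := by
      omega
    calc ‖a (i - (k : ℤ))‖ ^ q ^ k ≤ (‖ϖ‖ ^ q ^ N) ^ q ^ k := by
          apply pow_le_pow_left₀ (norm_nonneg _) (hMbound _ h1)
      _ = ‖ϖ‖ ^ (q ^ N * q ^ k) := by rw [pow_mul]
      _ ≤ ‖ϖ‖ ^ q ^ N := by
          apply pow_le_pow_of_le_one hϖ0.le hϖ1.le
          exact Nat.le_mul_of_pos_right _ (Nat.pos_of_ne_zero (by positivity))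
  · calc ‖a (i - (k : ℤ))‖ ^ q ^ k ≤ ‖ϖ‖ ^ q ^ k := by
          apply pow_le_pow_left₀ (norm_nonneg _) (hbound _)
      _ ≤ ‖ϖ‖ ^ q ^ N := by
          apply pow_le_pow_of_le_one hϖ0.le hϖ1.le
          exact Nat.pow_le_pow_right hq1 (by omega)
end

section
/- For r ∈ K, the sequence δ₀r lies in the image of F − 1 : c₀(ℤ, K) → c₀(ℤ, K), i.e. there exists b ∈ c₀(ℤ, K) with (b_{i−1})^q − b_i equal to r for i = 0 and to 0 for all i ≠ 0, if and only if ‖r‖ < 1 (i.e. r ∈ K^{++}). -/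
/-!
Away from index `0` the equation reads `b i = b (i - 1) ^ q`, and `‖x ^ q‖ < 1 ↔ ‖x‖ < 1`, so the
condition `‖b i‖ < 1` is constant along `i ≥ 0` and along `i ≤ -1`. Since `b` tends to `0` at both
ends, it holds at `0` and at `-1`, and then `r = b (-1) ^ q - b 0` has norm `< 1` by the ultrametric
inequality. Conversely, for `‖r‖ < 1` the sequence `b i = (-r) ^ q ^ i` for `i ≥ 0`, `b i = 0` for
`i < 0`, is a solution, and it tends to `0` because `q ^ i → ∞`.
-/

open Filter Topology

lemma norm_pow_lt_one_iff {K : Type*} [NormedDivisionRing K] {q : ℕ} (hq : q ≠ 0) (x : K) :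
    ‖x ^ q‖ < 1 ↔ ‖x‖ < 1 := by
  rw [norm_pow, pow_lt_one_iff_of_nonneg (norm_nonneg x) hq]

lemma norm_lt_one_of_tendsto_zero_of_norm_succ_lt_one_iff {E : Type*} [SeminormedAddGroup E]
    {u : ℕ → E} (hu : Tendsto u atTop (𝓝 0)) (hstep : ∀ n, ‖u (n + 1)‖ < 1 ↔ ‖u n‖ < 1) :
    ‖u 0‖ < 1 := by
  obtain ⟨N, hN⟩ :=
    ((tendsto_zero_iff_norm_tendsto_zero.1 hu).eventually (gt_mem_nhds one_pos)).exists
  have hconst : ∀ n, ‖u n‖ < 1 ↔ ‖u 0‖ < 1 := by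
    intro n
    induction n with
    | zero => rfl
    | succ n ih => rw [hstep, ih]
  exact (hconst N).1 hN

section IsC0

variable {K : Type*} [NormedField K]

lemma IsC0.tendsto_comp {b : ℤ → K} (hb : IsC0 b) {g : ℕ → ℤ} (hg : g.Injective) :
    Tendsto (b ∘ g) atTop (𝓝 0) :=
  Nat.cofinite_eq_atTop ▸ hb.comp hg.tendsto_cofinite

lemma isC0_extendByZero {u : ℕ → K} (hu : Tendsto u atTop (𝓝 0)) :
    IsC0 fun i : ℤ => if 0 ≤ i then u i.toNat else 0 := by
  rw [IsC0, Int.cofinite_eq, tendsto_sup]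
  constructor
  · refine tendsto_const_nhds.congr' ?_
    filter_upwards [eventually_lt_atBot 0] with i hi
    rw [if_neg hi.not_ge]
  · have htoNat : Tendsto Int.toNat atTop atTop :=
      tendsto_atTop_atTop.2 fun n => ⟨n, fun i hi => by omega⟩
    refine (hu.comp htoNat).congr' ?_
    filter_upwards [eventually_ge_atTop 0] with i hi
    rw [if_pos hi, Function.comp_apply]

variable {q : ℕ} {r : K}

theorem norm_lt_one_of_isC0_of_forall_pow_sub_eq_delta [IsUltrametricDist K] (hq : q ≠ 0)
    {b : ℤ → K} (hb : IsC0 b) (h : ∀ i : ℤ, b (i - 1) ^ q - b i = if i = 0 then r else 0) :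
    ‖r‖ < 1 := by
  have hrec : ∀ i ≠ 0, b i = b (i - 1) ^ q := fun i hi =>
    (sub_eq_zero.1 (by simpa [hi] using h i)).symm
  have hb0 : ‖b 0‖ < 1 := by
    refine norm_lt_one_of_tendsto_zero_of_norm_succ_lt_one_iff (u := fun n : ℕ => b n)
      (hb.tendsto_comp Nat.cast_injective) fun n => ?_
    rw [Nat.cast_succ, hrec _ (by omega), add_sub_cancel_right, norm_pow_lt_one_iff hq]
  have hb1 : ‖b (-1)‖ < 1 := by
    refine norm_lt_one_of_tendsto_zero_of_norm_succ_lt_one_iff (u := fun n : ℕ => b (-1 - n))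
      (hb.tendsto_comp fun m n hmn => by simpa using hmn) fun n => ?_
    rw [hrec (-1 - n) (by omega), Nat.cast_succ, sub_add_eq_sub_sub, norm_pow_lt_one_iff hq]
  have hr : r = b (-1) ^ q - b 0 := by simpa using (h 0).symm
  rw [hr, sub_eq_add_neg]
  refine (IsUltrametricDist.norm_add_le_max _ _).trans_lt (max_lt ?_ ?_)
  · rwa [norm_pow_lt_one_iff hq]
  · rwa [norm_neg]

theorem exists_isC0_forall_pow_sub_eq_delta (hq : 1 < q) (hr : ‖r‖ < 1) :
    ∃ b : ℤ → K, IsC0 b ∧ ∀ i : ℤ, b (i - 1) ^ q - b i = if i = 0 then r else 0 := by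
  refine ⟨fun i => if 0 ≤ i then (-r) ^ q ^ i.toNat else 0,
    isC0_extendByZero (u := fun n => (-r) ^ q ^ n) ?_, fun i => ?_⟩
  · exact (tendsto_pow_atTop_nhds_zero_of_norm_lt_one (by rwa [norm_neg])).comp
      (tendsto_pow_atTop_atTop_of_one_lt hq)
  · have hq0 : q ≠ 0 := by omega
    dsimp only
    rcases lt_trichotomy i 0 with hi | rfl | hi
    · rw [if_neg hi.ne, if_neg (by omega), if_neg (by omega), zero_pow hq0, sub_zero]
    · simp [hq0]
    · rw [if_neg hi.ne', if_pos (by omega), if_pos hi.le, ← pow_mul, ← pow_succ,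
        show (i - 1).toNat + 1 = i.toNat by omega, sub_self]

end IsC0

theorem delta_mem_range_FSubOne_iff_general
    (p f q : ℕ) (hp : p.Prime) (hf : 1 ≤ f) (hq : q = p ^ f)
    (K : Type*) [NontriviallyNormedField K] [IsUltrametricDist K]
    (r : K) :
    (∃ b : ℤ → K, IsC0 b ∧
        ∀ i : ℤ, (b (i - 1)) ^ q - b i = if i = 0 then r else 0) ↔ ‖r‖ < 1 := by
  have hq1 : 1 < q := hq ▸ Nat.one_lt_pow (by omega) hp.one_lt
  exact ⟨fun ⟨b, hb, h⟩ => norm_lt_one_of_isC0_of_forall_pow_sub_eq_delta (by omega) hb h,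
    exists_isC0_forall_pow_sub_eq_delta hq1⟩

/-- For `r ∈ K`, the sequence `δ₀ r` (value `r` at index `0`, zero elsewhere) lies in the
image of `F - 1 : c₀(ℤ, K) → c₀(ℤ, K)` if and only if `‖r‖ < 1`, i.e. `r ∈ K^{++}`. -/
theorem delta_mem_range_FSubOne_iff
    (p f q : ℕ) (hp : p.Prime) (hf : 1 ≤ f) (hq : q = p ^ f)
    (K : Type*) [NontriviallyNormedField K] [IsUltrametricDist K]
    [CompleteSpace K] [CharP K p]
    (r : K) :
    (∃ b : ℤ → K, IsC0 b ∧
        ∀ i : ℤ, (b (i - 1)) ^ q - b i = if i = 0 then r else 0) ↔ ‖r‖ < 1 :=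
  delta_mem_range_FSubOne_iff_general p f q hp hf hq K r
end
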